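/- arXiv:2008.09680 — 2 statements merged into one kernel-verified Lean document; each statement's English description precedes it below -/
import Mathlib

section
/- Let G_Fac be a factor graph, r a set of 'recognized' edges, and s = \alpha(A) for a satisfying assignment A of the propositional formula prop_{G_Fac} (encoding: acyclicity of the contraction via path variables; each factor covered by exactly one selected edge; each variable covered by at least one selected edge; all edges of r selected; variables covered by r have no other selected edges; selected/unselected edge pairs on a factor induce path atoms; and path atoms are transitively closed). Then r \subseteq s, the contraction C(G_Fac, s) is acyclic, and its joint density equals that of G_Fac (soundness). -/
/-!
A contraction edge `a → b` comes from an unselected edge `(a, f)` and a selected edge `(b, f)`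
on a common factor, so rule (7) puts it into the path relation, which rule (8) makes
transitive; a cycle of the contraction would therefore give a self-path, excluded by rule (1).
Rules (2) and (3) make the selection a function from factors to variables, so the density of
the contraction is the product of all factors, regrouped along the fibres of that function.
-/

variable {V F : Type} [Fintype V] [Fintype F] [DecidableEq V] [DecidableEq F]

/-- The set of factors assigned to variable `v` by the edge selection set `s`. -/
def Fof (s : Finset (V × F)) (v : V) : Finset F :=
  Finset.univ.filter (fun f => (v, f) ∈ s)

/-- The joint density of the contraction `C(G_Fac, s)`: the product, over variables,
of the assigned conditional densities (each the product of the factors selected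
to that variable). -/
noncomputable def pdfC (s : Finset (V × F)) (fac : F → (V → ℝ) → ℝ) (x : V → ℝ) : ℝ :=
  ∏ v, ∏ f ∈ Fof s v, fac f x

/-- The directed edge relation of the contraction `C(G_Fac, s)`: there is an edge
`(a, b)` when some factor `f` has `(b, f)` selected and `(a, f)` an edge of the
factor graph with `a ≠ b`. -/
def Cedge (E s : Finset (V × F)) (a b : V) : Prop :=
  ∃ f, (b, f) ∈ s ∧ (a, f) ∈ E ∧ a ≠ b

/-- The contraction edge relation used in the SAT encoding: there is a DAG edge
`(a, b)` when some factor `f` has an unselected factor-graph edge `(a, f)` and a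
selected edge `(b, f)`. -/
def CedgeSel (E s : Finset (V × F)) (a b : V) : Prop :=
  ∃ f, (b, f) ∈ s ∧ (a, f) ∈ E ∧ (a, f) ∉ s

omit [Fintype V] [Fintype F] [DecidableEq V] [DecidableEq F] in
theorem cedgeSel_le {E s : Finset (V × F)} {Path : V → V → Prop} (hsE : s ⊆ E)
    (h : ∀ (f : F) (a b : V), (a, f) ∈ E → (b, f) ∈ E → (a, f) ∉ s → (b, f) ∈ s → Path a b) :
    CedgeSel E s ≤ Path := by
  rintro a b ⟨f, hbs, haE, has⟩
  exact h f a b haE (hsE hbs) has hbs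

omit [Fintype V] in
theorem Fof_eq_filter {s : Finset (V × F)} {g : F → V} (hg : ∀ v f, (v, f) ∈ s ↔ g f = v)
    (v : V) : Fof s v = Finset.univ.filter (fun f => g f = v) := by
  ext f
  simp only [Fof, Finset.mem_filter, Finset.mem_univ, true_and, hg]

theorem pdfC_eq_prod_of_existsUnique {s : Finset (V × F)} (hs : ∀ f, ∃! v, (v, f) ∈ s)
    (fac : F → (V → ℝ) → ℝ) (x : V → ℝ) : pdfC s fac x = ∏ f, fac f x := by
  choose g hg huniq using hs
  have hfiber : ∀ v f, (v, f) ∈ s ↔ g f = v :=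
    fun v f => ⟨fun h => (huniq f v h).symm, fun h => h ▸ hg f⟩
  simp only [pdfC, Fof_eq_filter hfiber]
  exact Finset.prod_fiberwise Finset.univ g (fun f => fac f x)

theorem stmt8_general (E r s : Finset (V × F)) (Path : V → V → Prop)
    (hsE : s ⊆ E)
    (rule1 : ∀ v : V, ¬ Path v v)
    (rule2 : ∀ f : F, ∃ v : V, (v, f) ∈ s)
    (rule3 : ∀ (f : F) (v1 v2 : V), v1 ≠ v2 → (v1, f) ∈ s → (v2, f) ∉ s)
    (rule5 : ∀ p ∈ r, p ∈ s)
    (rule7 : ∀ (f : F) (v1 v2 : V), (v1, f) ∈ E → (v2, f) ∈ E →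
      (v1, f) ∉ s → (v2, f) ∈ s → Path v1 v2)
    (rule8 : ∀ v1 v2 v3 : V, Path v1 v2 → Path v2 v3 → Path v1 v3)
    (fac : F → (V → ℝ) → ℝ) :
    r ⊆ s ∧
    (∀ v : V, ¬ Relation.TransGen (CedgeSel E s) v v) ∧
    (∀ x : V → ℝ, pdfC s fac x = ∏ f, fac f x) := by
  have : IsTrans V Path := ⟨rule8⟩
  have hcycle_path : Relation.TransGen (CedgeSel E s) ≤ Path :=
    Relation.transGen_minimal (cedgeSel_le hsE rule7)
  have hunique : ∀ f, ∃! v, (v, f) ∈ s := fun f =>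
    existsUnique_of_exists_of_unique (rule2 f) fun v1 v2 h1 h2 =>
      not_not.mp fun hne => rule3 f v1 v2 hne h1 h2
  exact ⟨rule5, fun v h => rule1 v (hcycle_path v v h), pdfC_eq_prod_of_existsUnique hunique fac⟩

/-- soundness of the SAT encoding: Let `G_Fac` be a factor graph with
edges `E`, `r` a set of recognized edges, and let a satisfying assignment of
`prop_{G_Fac}` be given by the selected edge set `s = α(A)` together with the path
relation `Path`.  The rules of `prop_{G_Fac}` are: (1) no self-paths, (2) every
factor has a selected edge, (3) no factor has two selected edges, (4) every variable
has a selected edge, (5) all edges of `r` are selected, (6) variables covered by `r`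
have no other selected edges, (7) an unselected/selected pair of factor-graph edges
on a factor induces a path atom, (8) path atoms compose transitively.  Then
`r ⊆ s`, the contraction `C(G_Fac, s)` is acyclic, and its joint density equals
that of `G_Fac` (for every factor densities `fac` and every assignment `x`). -/
theorem stmt8 (E r s : Finset (V × F)) (Path : V → V → Prop)
    (hsE : s ⊆ E) (hrE : r ⊆ E)
    (rule1 : ∀ v : V, ¬ Path v v)
    (rule2 : ∀ f : F, ∃ v : V, (v, f) ∈ s)
    (rule3 : ∀ (f : F) (v1 v2 : V), v1 ≠ v2 → (v1, f) ∈ s → (v2, f) ∉ s)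
    (rule4 : ∀ v : V, ∃ f : F, (v, f) ∈ s)
    (rule5 : ∀ p ∈ r, p ∈ s)
    (rule6 : ∀ (v : V) (f1 f2 : F), (v, f1) ∈ r → f1 ≠ f2 → (v, f2) ∉ s)
    (rule7 : ∀ (f : F) (v1 v2 : V), (v1, f) ∈ E → (v2, f) ∈ E →
      (v1, f) ∉ s → (v2, f) ∈ s → Path v1 v2)
    (rule8 : ∀ v1 v2 v3 : V, Path v1 v2 → Path v2 v3 → Path v1 v3)
    (fac : F → (V → ℝ) → ℝ) :
    r ⊆ s ∧
    (∀ v : V, ¬ Relation.TransGen (CedgeSel E s) v v) ∧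
    (∀ x : V → ℝ, pdfC s fac x = ∏ f, fac f x) :=
  stmt8_general E r s Path hsE rule1 rule2 rule3 rule5 rule7 rule8 fac
end

section
/- Conversely (completeness of the SAT encoding): if s \subseteq E(G_Fac) is an edge selection set with r \subseteq s such that C(G_Fac, s) is an acyclic sound transformation of G_Fac and variables covered by r are covered only by their r-edge, then the assignment setting Sel_{v,f} true for (v,f) \in s and P_{v1->v2} true exactly when there is a directed path from v1 to v2 in C(G_Fac, s) satisfies prop_{G_Fac}. -/
variable {V F : Type} [Fintype V] [Fintype F] [DecidableEq V] [DecidableEq F]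

omit [Fintype V] [Fintype F] [DecidableEq V] [DecidableEq F] in
theorem cedge_of_notMem_of_mem {E s : Finset (V × F)} {f : F} {a b : V}
    (ha : (a, f) ∈ E) (ha' : (a, f) ∉ s) (hb : (b, f) ∈ s) : Cedge E s a b :=
  ⟨f, hb, ha, by rintro rfl; exact ha' hb⟩

theorem stmt9_general (E r s : Finset (V × F))
    (hrs : r ⊆ s)
    (hfac : ∀ f : F, ∃! v : V, (v, f) ∈ s)
    (hvar : ∀ v : V, ∃ f : F, (v, f) ∈ s)
    (hronly : ∀ (v : V) (f1 f2 : F), (v, f1) ∈ r → f1 ≠ f2 → (v, f2) ∉ s)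
    (hacyc : ∀ v : V, ¬ Relation.TransGen (Cedge E s) v v) :
    -- the path atoms are interpreted as directed paths of the contraction:
    (let Path : V → V → Prop := Relation.TransGen (Cedge E s)
    -- rule 1: acyclicity
    (∀ v : V, ¬ Path v v) ∧
    -- rule 2: all factors are covered
    (∀ f : F, ∃ v : V, (v, f) ∈ s) ∧
    -- rule 3: factors are not covered more than once
    (∀ (f : F) (v1 v2 : V), v1 ≠ v2 → (v1, f) ∈ s → (v2, f) ∉ s) ∧
    -- rule 4: all variables are covered
    (∀ v : V, ∃ f : F, (v, f) ∈ s) ∧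
    -- rule 5: edges of r are included
    (∀ p ∈ r, p ∈ s) ∧
    -- rule 6: variables covered by r are not included again
    (∀ (v : V) (f1 f2 : F), (v, f1) ∈ r → f1 ≠ f2 → (v, f2) ∉ s) ∧
    -- rule 7: selecting an edge creates edges (hence paths) in the DAG
    (∀ (f : F) (v1 v2 : V), (v1, f) ∈ E → (v2, f) ∈ E →
      (v1, f) ∉ s → (v2, f) ∈ s → Path v1 v2) ∧
    -- rule 8: paths compose
    (∀ v1 v2 v3 : V, Path v1 v2 → Path v2 v3 → Path v1 v3)) := by
  refine ⟨hacyc, fun f => (hfac f).exists, ?_, hvar, fun _ hp => hrs hp, hronly, ?_,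
    fun _ _ _ => Relation.TransGen.trans⟩
  · exact fun f v1 v2 hne h1 h2 => hne ((hfac f).unique h1 h2)
  · exact fun _ _ _ h1 _ hn hs2 => .single (cedge_of_notMem_of_mem h1 hn hs2)

/-- completeness of the SAT encoding: if `s ⊆ E` is an edge selection
set with `r ⊆ s` whose contraction `C(G_Fac, s)` is an acyclic sound transformation
of `G_Fac` (each factor in exactly one selected edge, each variable in at least one),
and variables covered by `r` are covered only by their `r`-edge, then the assignment
setting `Sel_{v,f}` true for `(v,f) ∈ s` and `P_{v1→v2}` true exactly when there is a
directed path from `v1` to `v2` in `C(G_Fac, s)` satisfies all eight rules of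
`prop_{G_Fac}`. -/
theorem stmt9 (E r s : Finset (V × F))
    (hsE : s ⊆ E) (hrs : r ⊆ s)
    (hfac : ∀ f : F, ∃! v : V, (v, f) ∈ s)
    (hvar : ∀ v : V, ∃ f : F, (v, f) ∈ s)
    (hronly : ∀ (v : V) (f1 f2 : F), (v, f1) ∈ r → f1 ≠ f2 → (v, f2) ∉ s)
    (hacyc : ∀ v : V, ¬ Relation.TransGen (Cedge E s) v v) :
    -- the path atoms are interpreted as directed paths of the contraction:
    (let Path : V → V → Prop := Relation.TransGen (Cedge E s)
    -- rule 1: acyclicity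
    (∀ v : V, ¬ Path v v) ∧
    -- rule 2: all factors are covered
    (∀ f : F, ∃ v : V, (v, f) ∈ s) ∧
    -- rule 3: factors are not covered more than once
    (∀ (f : F) (v1 v2 : V), v1 ≠ v2 → (v1, f) ∈ s → (v2, f) ∉ s) ∧
    -- rule 4: all variables are covered
    (∀ v : V, ∃ f : F, (v, f) ∈ s) ∧
    -- rule 5: edges of r are included
    (∀ p ∈ r, p ∈ s) ∧
    -- rule 6: variables covered by r are not included again
    (∀ (v : V) (f1 f2 : F), (v, f1) ∈ r → f1 ≠ f2 → (v, f2) ∉ s) ∧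
    -- rule 7: selecting an edge creates edges (hence paths) in the DAG
    (∀ (f : F) (v1 v2 : V), (v1, f) ∈ E → (v2, f) ∈ E →
      (v1, f) ∉ s → (v2, f) ∈ s → Path v1 v2) ∧
    -- rule 8: paths compose
    (∀ v1 v2 v3 : V, Path v1 v2 → Path v2 v3 → Path v1 v3)) :=
  stmt9_general E r s hrs hfac hvar hronly hacyc
end
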